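/- Let (V, E) be a finite directed graph such that every connected component of its underlying undirected graph contains a directed cycle. Then there exists a function f : E → {0,1} such that, setting E' = conv(f⁻¹(0)) ∪ f⁻¹(1), every vertex of V has an in-neighbour with respect to E', and every directed cycle of E' is entirely contained in f⁻¹(1) \ conv(f⁻¹(0)). -/
import Mathlib


/-- The three labels of a labelling: `inn` (in), `out`, `undec`. -/
inductive Label where
  | inn : Label
  | out : Label
  | undec : Label
deriving DecidableEq

/-- Undirected connectivity: reachability in the symmetric closure of `C`.
`Conn C a b` holds iff `a` and `b` are joined by an undirected path, i.e.
they lie in the same connected component of `(A, C)`. -/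
def Conn {A : Type*} (C : A → A → Prop) : A → A → Prop :=
  Relation.ReflTransGen (fun x y => C x y ∨ C y x)

/-- A CC-wise total order on the AAF `(A, C)`: a reflexive transitive relation
whose restriction to each connected component is total. -/
structure CCOrder {A : Type*} (C : A → A → Prop) where
  le : A → A → Prop
  refl : ∀ a, le a a
  trans : ∀ a b c, le a b → le b c → le a c
  total : ∀ a b, Conn C a b → le a b ∨ le b a

/-- Strict part: `a ≺ b` iff `a ≼ b` and not `b ≼ a`. -/
def CCOrder.lt {A : Type*} {C : A → A → Prop} (r : CCOrder C) (a b : A) : Prop :=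
  r.le a b ∧ ¬ r.le b a

/-- Reduction 1: `C₁ = {(a,b) | ((a,b) ∈ C ∧ b ≼ a) ∨ ((b,a) ∈ C ∧ b ≺ a)}`. -/
def red1 {A : Type*} (C : A → A → Prop) (r : CCOrder C) (a b : A) : Prop :=
  (C a b ∧ r.le b a) ∨ (C b a ∧ r.lt b a)

/-- Reduction 2: `C₂ = {(a,b) ∈ C | b ≼ a ∨ (b,a) ∉ C}`. -/
def red2 {A : Type*} (C : A → A → Prop) (r : CCOrder C) (a b : A) : Prop :=
  C a b ∧ (r.le b a ∨ ¬ C b a)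

/-- Reduction 3: `C₁ ∪ C₂`. -/
def red3 {A : Type*} (C : A → A → Prop) (r : CCOrder C) (a b : A) : Prop :=
  red1 C r a b ∨ red2 C r a b

/-- Reduction 4: `C₄ = {(a,b) ∈ C | b ≼ a}`. -/
def red4 {A : Type*} (C : A → A → Prop) (r : CCOrder C) (a b : A) : Prop :=
  C a b ∧ r.le b a

/-- `l` is a complete labelling of the attack relation `C`:
`l a = in` iff all attackers of `a` are `out`, and
`l a = out` iff some attacker of `a` is `in` (and `undec` otherwise,
which is automatic for a three-valued labelling). -/
def CompleteLabelling {A : Type*} (C : A → A → Prop) (l : A → Label) : Prop :=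
  ∀ a, (l a = Label.inn ↔ ∀ b, C b a → l b = Label.out) ∧
       (l a = Label.out ↔ ∃ b, C b a ∧ l b = Label.inn)

/-- `(a,b) ∈ F₁`: an attack of `C` assigned value 1 by `f`. -/
def inF1 {A : Type*} (C : A → A → Prop) (f : A → A → Bool) (a b : A) : Prop :=
  C a b ∧ f a b = true

/-- `(a,b) ∈ F₀`: an attack of `C` assigned value 0 by `f`. -/
def inF0 {A : Type*} (C : A → A → Prop) (f : A → A → Bool) (a b : A) : Prop :=
  C a b ∧ f a b = false

/-- The relation `conv(F₀) ∪ F₁`. -/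
def Drel {A : Type*} (C : A → A → Prop) (f : A → A → Bool) (a b : A) : Prop :=
  inF0 C f b a ∨ inF1 C f a b

/-- The relation `F₁ \ conv(F₀)`. -/
def Erel {A : Type*} (C : A → A → Prop) (f : A → A → Bool) (a b : A) : Prop :=
  inF1 C f a b ∧ ¬ inF0 C f b a

/-- `f` is a preference function over `(A, C)`: every directed cycle of
`conv(F₀) ∪ F₁` is entirely contained in `F₁ \ conv(F₀)`.  Equivalently
(edge-wise): every edge of `conv(F₀) ∪ F₁` lying on a directed cycle
(i.e. admitting a return path) belongs to `F₁ \ conv(F₀)`. -/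
def IsPrefFun {A : Type*} (C : A → A → Prop) (f : A → A → Bool) : Prop :=
  ∀ a b, Drel C f a b → Relation.ReflTransGen (Drel C f) b a → Erel C f a b

/-- A ranking function for `(F, l)` (assuming no argument is labelled `out`):
(1) every attack touching an `in`-labelled argument strictly decreases rank, and
(2) every `undec` argument has an `undec` attacker of rank at most its own. -/
def IsRanking {A : Type*} (C : A → A → Prop) (l : A → Label) (ψ : A → ℤ) : Prop :=
  (∀ u v, C u v → (l u = Label.inn ∨ l v = Label.inn) → ψ u > ψ v) ∧
  (∀ u, l u = Label.undec → ∃ v, C v u ∧ l v = Label.undec ∧ ψ v ≤ ψ u)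
/-- Vertices lying on a directed cycle. -/
def Wset {V : Type*} (E : V → V → Prop) (v : V) : Prop :=
  ∃ u, E v u ∧ Relation.ReflTransGen E u v

/-- Vertices at undirected distance at most `n` from `Wset`. -/
def reachN {V : Type*} (E : V → V → Prop) : ℕ → V → Prop
  | 0, v => Wset E v
  | n + 1, v => reachN E n v ∨ ∃ u, (E v u ∨ E u v) ∧ reachN E n u

/-- Undirected distance to `Wset`. -/
noncomputable def phiF {V : Type*} (E : V → V → Prop) (v : V) : ℕ :=
  sInf {n | reachN E n v}

/-- if every connected component of the underlying undirected graph
of a finite digraph contains a directed cycle, there is `f : E → {0,1}` such that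
in `E' = conv(f⁻¹(0)) ∪ f⁻¹(1)` every vertex has an in-neighbour and every
directed cycle of `E'` is contained in `f⁻¹(1) \ conv(f⁻¹(0))`. -/
theorem stmt2 {V : Type*} [Fintype V] (E : V → V → Prop)
    (hcyc : ∀ v, ∃ x y, Conn E v x ∧ E x y ∧ Relation.ReflTransGen E y x) :
    ∃ f : V → V → Bool, (∀ v, ∃ u, Drel E f u v) ∧ IsPrefFun E f := by
  classical
  set φ : V → ℕ := phiF E with hφdef
  have hne : ∀ v, {n | reachN E n v}.Nonempty := by
    intro v
    obtain ⟨x, y, hconn, hxy, hyx⟩ := hcyc v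
    have hx : Wset E x := ⟨y, hxy, hyx⟩
    unfold Conn at hconn
    induction hconn using Relation.ReflTransGen.head_induction_on with
    | refl => exact ⟨0, hx⟩
    | head hab _ ih =>
      obtain ⟨n, hn⟩ := ih
      exact ⟨n + 1, Or.inr ⟨_, hab, hn⟩⟩
  have hreach : ∀ v, reachN E (φ v) v := fun v => Nat.sInf_mem (hne v)
  have hle : ∀ v n, reachN E n v → φ v ≤ n := fun v n h => Nat.sInf_le h
  -- every vertex has a suitable neighbour
  have hnbr : ∀ v, ∃ u, (E u v ∧ φ u ≤ φ v) ∨ (E v u ∧ φ u < φ v) := by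
    intro v
    cases h : φ v with
    | zero =>
      have h0 : reachN E 0 v := h ▸ hreach v
      obtain ⟨u, hvu, hpath⟩ := h0
      rcases Relation.ReflTransGen.cases_tail hpath with heq | ⟨w, huw, hwv⟩
      · subst heq
        exact ⟨v, Or.inl ⟨hvu, by omega⟩⟩
      · have hw : reachN E 0 w := ⟨v, hwv, Relation.ReflTransGen.head hvu huw⟩
        have := hle w 0 hw
        exact ⟨w, Or.inl ⟨hwv, by omega⟩⟩
    | succ n =>
      have h1 : reachN E (n + 1) v := h ▸ hreach v
      have h2 : ¬ reachN E n v := fun hc => by have := hle v n hc; omega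
      rcases h1 with hc | ⟨u, hsym, hu⟩
      · exact absurd hc h2
      · have hun : φ u ≤ n := hle u n hu
        rcases hsym with hvu | huv
        · exact ⟨u, Or.inr ⟨hvu, by omega⟩⟩
        · exact ⟨u, Or.inl ⟨huv, by omega⟩⟩
  refine ⟨fun a b => decide (φ a ≤ φ b), ?_, ?_⟩
  · intro v
    obtain ⟨u, h | h⟩ := hnbr v
    · exact ⟨u, Or.inr ⟨h.1, decide_eq_true_iff.mpr h.2⟩⟩
    · refine ⟨u, Or.inl ⟨h.1, decide_eq_false_iff_not.mpr ?_⟩⟩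
      omega
  · -- IsPrefFun
    have hmono : ∀ a b, Drel E (fun a b => decide (φ a ≤ φ b)) a b → φ a ≤ φ b := by
      intro a b h
      rcases h with ⟨hE, hf⟩ | ⟨hE, hf⟩
      · have := decide_eq_false_iff_not.mp hf
        omega
      · exact decide_eq_true_iff.mp hf
    have hpathmono : ∀ x y,
        Relation.ReflTransGen (Drel E (fun a b => decide (φ a ≤ φ b))) x y → φ x ≤ φ y := by
      intro x y h
      induction h with
      | refl => exact le_rfl
      | tail _ hstep ih => exact le_trans ih (hmono _ _ hstep)
    intro a b hab hpath
    have hba : φ b ≤ φ a := hpathmono _ _ hpath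
    have hab' : φ a ≤ φ b := hmono _ _ hab
    have heq : φ a = φ b := le_antisymm hab' hba
    have hnot : ¬ inF0 E (fun a b => decide (φ a ≤ φ b)) b a := by
      rintro ⟨hE, hf⟩
      have := decide_eq_false_iff_not.mp hf
      omega
    rcases hab with h0 | h1
    · exact absurd h0 hnot
    · exact ⟨h1, hnot⟩
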